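/- Let f be a Boolean function in m variables that is not affine. Then the coset RM(1,m) + f contains at least three unbalanced words; equivalently, it has strictly fewer than 2^{m+1} - 2 balanced words. -/

import Mathlib

/-- Weight of a Boolean function: number of inputs mapped to 1. -/
def wtF {m : ℕ} (f : (Fin m → ZMod 2) → ZMod 2) : ℕ :=
  (Finset.univ.filter fun x => f x = 1).card

/-- The Reed–Muller code RM(r,m): the span of the monomial functions of degree ≤ r,
i.e. truth tables of Boolean functions in m variables of degree at most r. -/
def RM (r m : ℕ) : Submodule (ZMod 2) ((Fin m → ZMod 2) → ZMod 2) :=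
  Submodule.span (ZMod 2)
    {f | ∃ S : Finset (Fin m), S.card ≤ r ∧ f = fun x => ∏ i ∈ S, x i}

/-!
If `f` is not affine, its Walsh spectrum has at least two nonzero coefficients: it cannot
vanish identically, and by Fourier inversion a spectrum supported at a single point `a`
makes `(-1) ^ (f x + a ⬝ x)` constant, i.e. `f` affine. Every `a` with `W_f(a) ≠ 0` gives
the two unbalanced words `f + a ⬝ x` and `f + a ⬝ x + 1` of the coset, since their sign sums
are `± W_f(a)`. So at least four of the `2 ^ (m + 1)` words of the coset are unbalanced.
-/

open Finset

namespace BooleanFunction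

def toSign (v : ZMod 2) : ℤ := if v = 1 then -1 else 1

lemma toSign_add (u v : ZMod 2) : toSign (u + v) = toSign u * toSign v := by revert u v; decide

lemma toSign_injective : Function.Injective toSign := by decide

lemma toSign_ne_zero (v : ZMod 2) : toSign v ≠ 0 := by revert v; decide

lemma toSign_mul_self (v : ZMod 2) : toSign v * toSign v = 1 := by revert v; decide

lemma toSign_one : toSign 1 = -1 := rfl

lemma toSign_eq_one_sub_two_mul_ite (v : ZMod 2) : toSign v = 1 - 2 * if v = 1 then 1 else 0 := by
  revert v; decide

variable {ι : Type*} [Fintype ι]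

def affine : (ι → ZMod 2) × ZMod 2 →ₗ[ZMod 2] (ι → ZMod 2) → ZMod 2 where
  toFun p x := p.1 ⬝ᵥ x + p.2
  map_add' p q := by
    funext x
    simp only [Prod.fst_add, Prod.snd_add, add_dotProduct, Pi.add_apply]
    ring
  map_smul' c p := by funext x; simp [smul_dotProduct]; ring

lemma affine_apply (p : (ι → ZMod 2) × ZMod 2) (x : ι → ZMod 2) :
    affine p x = p.1 ⬝ᵥ x + p.2 := rfl

variable [DecidableEq ι]

lemma sum_toSign_dotProduct (z : ι → ZMod 2) :
    ∑ a : ι → ZMod 2, toSign (a ⬝ᵥ z) = if z = 0 then 2 ^ Fintype.card ι else 0 := by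
  split_ifs with hz
  · simp [hz, toSign]
  obtain ⟨i, hi⟩ : ∃ i, z i ≠ 0 := Function.ne_iff.mp hz
  have hzi : z i = 1 := by generalize z i = c at hi; revert c; decide
  have hflip (a : ι → ZMod 2) :
      -toSign (a ⬝ᵥ z) = toSign ((a + Pi.single i 1) ⬝ᵥ z) := by
    rw [add_dotProduct, single_dotProduct, one_mul, toSign_add, hzi, toSign_one, mul_neg_one]
  have hsum := Fintype.sum_equiv (Equiv.addRight (Pi.single i 1))
    (fun a => -toSign (a ⬝ᵥ z)) (fun a => toSign (a ⬝ᵥ z)) hflip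
  rw [sum_neg_distrib] at hsum
  linarith

def walsh (f : (ι → ZMod 2) → ZMod 2) (a : ι → ZMod 2) : ℤ :=
  ∑ x, toSign (f x + a ⬝ᵥ x)

theorem sum_walsh_mul_toSign (f : (ι → ZMod 2) → ZMod 2) (x : ι → ZMod 2) :
    ∑ a, walsh f a * toSign (a ⬝ᵥ x) = 2 ^ Fintype.card ι * toSign (f x) := by
  calc ∑ a, walsh f a * toSign (a ⬝ᵥ x)
      = ∑ y, toSign (f y) * ∑ a : ι → ZMod 2, toSign (a ⬝ᵥ (y - x)) := by
        simp only [walsh, sum_mul, mul_sum]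
        rw [sum_comm]
        refine sum_congr rfl fun y _ => sum_congr rfl fun a _ => ?_
        rw [ZModModule.sub_eq_add, dotProduct_add, toSign_add, toSign_add, mul_assoc]
    _ = 2 ^ Fintype.card ι * toSign (f x) := by
        simp_rw [sum_toSign_dotProduct, sub_eq_zero, mul_ite, mul_zero]
        rw [sum_ite_eq', if_pos (mem_univ x), mul_comm]

lemma exists_walsh_ne_zero (f : (ι → ZMod 2) → ZMod 2) :
    ∃ a, walsh f a ≠ 0 := by
  by_contra! h
  have := sum_walsh_mul_toSign f 0
  simp only [h, zero_mul, sum_const_zero] at this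
  exact mul_ne_zero (by positivity) (toSign_ne_zero _) this.symm

lemma affine_injective : Function.Injective (affine (ι := ι)) := by
  refine (injective_iff_map_eq_zero _).mpr fun ⟨a, b⟩ h => ?_
  have hb : b = 0 := by simpa [affine_apply] using congrFun h 0
  refine Prod.ext (funext fun i => ?_) hb
  simpa [affine_apply, hb] using congrFun h (Pi.single i 1)

lemma mem_range_affine_of_walsh_eq_zero {f : (ι → ZMod 2) → ZMod 2}
    {a : ι → ZMod 2} (h : ∀ b ≠ a, walsh f b = 0) : f ∈ LinearMap.range affine := by
  have hconst (x : ι → ZMod 2) :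
      2 ^ Fintype.card ι * toSign (f x + a ⬝ᵥ x) = walsh f a := by
    have hinv := sum_walsh_mul_toSign f x
    rw [sum_eq_single a (fun b _ hb => by rw [h b hb, zero_mul]) (by simp)] at hinv
    rw [toSign_add, ← mul_assoc, ← hinv, mul_assoc, toSign_mul_self, mul_one]
  refine ⟨(a, f 0), funext fun x => ?_⟩
  have hx : f x + a ⬝ᵥ x = f 0 := by
    apply toSign_injective
    simpa using mul_left_cancel₀ (by positivity) ((hconst x).trans (hconst 0).symm)
  rw [affine_apply, ← hx, add_comm, add_assoc, ZModModule.add_self, add_zero]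

theorem one_lt_card_walsh_ne_zero {f : (ι → ZMod 2) → ZMod 2}
    (hf : f ∉ LinearMap.range affine) : 1 < #{a | walsh f a ≠ 0} := by
  obtain ⟨a, ha⟩ := exists_walsh_ne_zero f
  rw [one_lt_card]
  by_contra! h
  exact hf (mem_range_affine_of_walsh_eq_zero fun b hb => by
    by_contra hb'; exact hb (h b (by simpa) a (by simpa)))

lemma sum_toSign_affine_add (f : (ι → ZMod 2) → ZMod 2) (p : (ι → ZMod 2) × ZMod 2) :
    ∑ x, toSign ((affine p + f) x) = toSign p.2 * walsh f p.1 := by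
  rw [walsh, mul_sum]
  refine sum_congr rfl fun x _ => ?_
  rw [Pi.add_apply, affine_apply, ← toSign_add]
  ring_nf

end BooleanFunction

open BooleanFunction

section

variable {m : ℕ}

lemma sum_toSign_eq_two_pow_sub_wtF (v : (Fin m → ZMod 2) → ZMod 2) :
    ∑ x, toSign (v x) = 2 ^ m - 2 * (wtF v : ℤ) := by
  simp only [toSign_eq_one_sub_two_mul_ite, sum_sub_distrib, ← mul_sum, sum_boole, sum_const,
    card_univ, wtF]
  simp

lemma RM_one_eq_range_affine : RM 1 m = LinearMap.range affine := by
  refine le_antisymm (Submodule.span_le.mpr ?_) ?_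
  · rintro _ ⟨S, hS, rfl⟩
    obtain h | h := Nat.le_one_iff_eq_zero_or_eq_one.mp hS
    · rw [card_eq_zero.mp h]
      exact ⟨(0, 1), by ext; simp [affine_apply]⟩
    · obtain ⟨i, rfl⟩ := card_eq_one.mp h
      exact ⟨(Pi.single i 1, 0), by ext; simp [affine_apply]⟩
  · rintro _ ⟨⟨a, b⟩, rfl⟩
    have hdecomp : affine (a, b) = ∑ i, a i • (fun x : Fin m → ZMod 2 => x i)
        + b • fun _ => 1 := by
      ext x; simp [affine_apply, dotProduct]
    have hmem (S : Finset (Fin m)) (hS : #S ≤ 1) :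
        (fun x : Fin m → ZMod 2 => ∏ i ∈ S, x i) ∈ RM 1 m :=
      Submodule.subset_span ⟨S, hS, rfl⟩
    rw [hdecomp]
    refine add_mem (sum_mem fun i _ => Submodule.smul_mem _ _ ?_) (Submodule.smul_mem _ _ ?_)
    · simpa using hmem {i} (by simp)
    · simpa using hmem ∅ (by simp)

lemma wtF_affine_add_ne_of_walsh_ne_zero (hm : m ≠ 0) {f : (Fin m → ZMod 2) → ZMod 2}
    {a : Fin m → ZMod 2} (ha : walsh f a ≠ 0) (b : ZMod 2) :
    wtF (affine (a, b) + f) ≠ 2 ^ (m - 1) := by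
  intro hbal
  have hsum := sum_toSign_affine_add f (a, b)
  rw [sum_toSign_eq_two_pow_sub_wtF, hbal, Nat.cast_pow, Nat.cast_ofNat, ← pow_succ',
    Nat.sub_add_cancel (Nat.one_le_iff_ne_zero.mpr hm), sub_self] at hsum
  exact mul_ne_zero (toSign_ne_zero b) ha hsum.symm

lemma coset_RM_one_eq_range (f : (Fin m → ZMod 2) → ZMod 2) :
    {v | ∃ c ∈ RM 1 m, v = c + f} = Set.range fun p => affine p + f := by
  ext v
  simp [RM_one_eq_range_affine, eq_comm]

lemma injective_affine_add (f : (Fin m → ZMod 2) → ZMod 2) :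
    Function.Injective fun p => affine p + f :=
  (add_left_injective f).comp affine_injective

lemma ncard_coset_RM_one (f : (Fin m → ZMod 2) → ZMod 2) :
    {v | ∃ c ∈ RM 1 m, v = c + f}.ncard = 2 ^ (m + 1) := by
  rw [coset_RM_one_eq_range, ← Set.image_univ,
    Set.ncard_image_of_injective _ (injective_affine_add f), Set.ncard_univ]
  simp [pow_succ]

lemma two_mul_card_walsh_ne_zero_le (hm : m ≠ 0) (f : (Fin m → ZMod 2) → ZMod 2) :
    2 * #{a | walsh f a ≠ 0} ≤
      {v | (∃ c ∈ RM 1 m, v = c + f) ∧ wtF v ≠ 2 ^ (m - 1)}.ncard := by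
  set S : Finset (Fin m → ZMod 2) := {a | walsh f a ≠ 0}
  have himage : (fun p => affine p + f) '' ↑(S ×ˢ (univ : Finset (ZMod 2))) ⊆
      {v | (∃ c ∈ RM 1 m, v = c + f) ∧ wtF v ≠ 2 ^ (m - 1)} := by
    rintro _ ⟨⟨a, b⟩, hab, rfl⟩
    refine ⟨⟨affine (a, b), RM_one_eq_range_affine ▸ ⟨(a, b), rfl⟩, rfl⟩, ?_⟩
    exact wtF_affine_add_ne_of_walsh_ne_zero hm (by simpa [S] using hab) b
  calc 2 * #S = #(S ×ˢ (univ : Finset (ZMod 2))) := by simp [card_product, mul_comm]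
    _ = ((fun p => affine p + f) '' ↑(S ×ˢ (univ : Finset (ZMod 2)))).ncard := by
      rw [Set.ncard_image_of_injective _ (injective_affine_add f), Set.ncard_coe_finset]
    _ ≤ _ := Set.ncard_le_ncard himage

end

theorem RM1_coset_unbalanced (m : ℕ) (f : (Fin m → ZMod 2) → ZMod 2)
    (hf : f ∉ RM 1 m) :
    3 ≤ {v | (∃ c ∈ RM 1 m, v = c + f) ∧ wtF v ≠ 2 ^ (m - 1)}.ncard ∧
    {v | (∃ c ∈ RM 1 m, v = c + f) ∧ wtF v = 2 ^ (m - 1)}.ncard < 2 ^ (m + 1) - 2 := by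
  have hsupp := one_lt_card_walsh_ne_zero (RM_one_eq_range_affine (m := m) ▸ hf)
  have hm : m ≠ 0 := by
    rintro rfl
    obtain ⟨a, -, b, -, hab⟩ := one_lt_card.mp hsupp
    exact hab (Subsingleton.elim a b)
  have hunbal := two_mul_card_walsh_ne_zero_le hm f
  have hsplit : {v | (∃ c ∈ RM 1 m, v = c + f) ∧ wtF v = 2 ^ (m - 1)}.ncard
      + {v | (∃ c ∈ RM 1 m, v = c + f) ∧ wtF v ≠ 2 ^ (m - 1)}.ncard = 2 ^ (m + 1) := by
    rw [← ncard_coset_RM_one f]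
    exact Set.ncard_inter_add_ncard_sdiff_eq_ncard _ {v | wtF v = 2 ^ (m - 1)}
  exact ⟨by omega, by omega⟩
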